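/- Under common preferences with homogeneous arrangement (l,k): if l ≠ k and min{l,k} < min{|D|,|H|}, then the (l,k)-matching is not stable; hence (l,k) is not adequate at any common-preference profile. -/

import Mathlib

/- Formal model of the two-step interview-then-match process of
Echenique-et-al-style markets: Step 1 computes the interview matching by
hospital-proposing deferred acceptance (with responsive, capacity-constrained
choice functions); Step 2 computes the final one-to-one matching by
doctor-proposing deferred acceptance on preferences restricted to interview
partners. -/

open Finset

section Model

variable {D H : Type*} [Fintype D] [Fintype H] [DecidableEq D] [DecidableEq H]

/-- The (at most) `n` best elements of `s` according to `rank` (lower rank = better). -/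
def topN {α : Type*} [DecidableEq α] (rank : α → ℕ) (n : ℕ) (s : Finset α) : Finset α :=
  s.filter fun x => (s.filter fun y => rank y < rank x).card < n

/-- A market: strict preferences represented by rank functions
(lower rank = more preferred) together with acceptability predicates. -/
structure Market (D H : Type*) where
  rankDH : D → H → ℕ
  accD : D → H → Bool
  rankHD : H → D → ℕ
  accH : H → D → Bool

/-- Strict preferences: rank functions are injective. -/
def Market.Strict (M : Market D H) : Prop :=
  (∀ d, Function.Injective (M.rankDH d)) ∧ (∀ h, Function.Injective (M.rankHD h))

/-- Hospital `h` proposes to its `ι h` best acceptable doctors that have not rejected it. -/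
def hProps (M : Market D H) (ι : H → ℕ) (R : Finset (H × D)) (h : H) : Finset D :=
  topN (M.rankHD h) (ι h) (univ.filter fun d => M.accH h d ∧ (h, d) ∉ R)

/-- Doctor `d` keeps her `κ d` best acceptable proposals. -/
def dKeeps (M : Market D H) (ι : H → ℕ) (κ : D → ℕ) (R : Finset (H × D)) (d : D) :
    Finset H :=
  topN (fun h => M.rankDH d h) (κ d) (univ.filter fun h => M.accD d h ∧ d ∈ hProps M ι R h)

/-- One round of hospital-proposing deferred acceptance: the (cumulative) rejection set
grows by the proposals not kept. -/
def iStep (M : Market D H) (ι : H → ℕ) (κ : D → ℕ) (R : Finset (H × D)) :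
    Finset (H × D) :=
  R ∪ univ.filter fun p : H × D => p.2 ∈ hProps M ι R p.1 ∧ p.1 ∉ dKeeps M ι κ R p.2

/-- Rejection set at the end of hospital-proposing DA (interview step). -/
def iRej (M : Market D H) (ι : H → ℕ) (κ : D → ℕ) : Finset (H × D) :=
  (iStep M ι κ)^[Fintype.card D * Fintype.card H] ∅

/-- The interview matching (the hospital-optimal stable many-to-many matching) computed
by hospital-proposing deferred acceptance: pairs `(h, d)` such that `h` interviews `d`. -/
def interviews (M : Market D H) (ι : H → ℕ) (κ : D → ℕ) : Finset (H × D) :=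
  univ.filter fun p : H × D =>
    p.2 ∈ hProps M ι (iRej M ι κ) p.1 ∧ p.1 ∈ dKeeps M ι κ (iRej M ι κ) p.2

/-- Doctor `d` proposes to her best interview partner that has not rejected her. -/
def dProps (M : Market D H) (V : Finset (H × D)) (S : Finset (D × H)) (d : D) :
    Finset H :=
  topN (M.rankDH d) 1 (univ.filter fun h => (h, d) ∈ V ∧ (d, h) ∉ S)

/-- Hospital `h` keeps its best proposal. -/
def hKeeps (M : Market D H) (V : Finset (H × D)) (S : Finset (D × H)) (h : H) :
    Finset D :=
  topN (M.rankHD h) 1 (univ.filter fun d => h ∈ dProps M V S d)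

/-- One round of doctor-proposing DA on preferences restricted to the interview matching `V`. -/
def mStep (M : Market D H) (V : Finset (H × D)) (S : Finset (D × H)) : Finset (D × H) :=
  S ∪ univ.filter fun p : D × H => p.2 ∈ dProps M V S p.1 ∧ p.1 ∉ hKeeps M V S p.2

/-- Rejection set at the end of the doctor-proposing DA of the matching step. -/
def mRej (M : Market D H) (V : Finset (H × D)) : Finset (D × H) :=
  (mStep M V)^[Fintype.card D * Fintype.card H] ∅

/-- The final matching: doctor-proposing DA on preferences restricted to interviews `V`. -/
def finalMatch (M : Market D H) (V : Finset (H × D)) : Finset (D × H) :=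
  univ.filter fun p : D × H =>
    p.2 ∈ dProps M V (mRej M V) p.1 ∧ p.1 ∈ hKeeps M V (mRej M V) p.2

/-- The `(ι,κ)`-matching: the culmination of the two-step process. -/
def ikMatching (M : Market D H) (ι : H → ℕ) (κ : D → ℕ) : Finset (D × H) :=
  finalMatch M (interviews M ι κ)

/-- `(d, h)` is a blocking pair of `μ` (w.r.t. the true, unrestricted preferences). -/
def Blocks (M : Market D H) (μ : Finset (D × H)) (d : D) (h : H) : Prop :=
  M.accD d h ∧ M.accH h d ∧ (d, h) ∉ μ ∧
    (∀ h', (d, h') ∈ μ → M.rankDH d h < M.rankDH d h') ∧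
    (∀ d', (d', h) ∈ μ → M.rankHD h d < M.rankHD h d')

instance (M : Market D H) (μ : Finset (D × H)) (d : D) (h : H) :
    Decidable (Blocks M μ d h) := by
  unfold Blocks; infer_instance

/-- A matching is stable if it admits no blocking pair. -/
def Stable (M : Market D H) (μ : Finset (D × H)) : Prop := ∀ d h, ¬ Blocks M μ d h

/-- `(ι,κ)` is adequate at `M` if the `(ι,κ)`-matching is stable. -/
def Adequate (M : Market D H) (ι : H → ℕ) (κ : D → ℕ) : Prop :=
  Stable M (ikMatching M ι κ)

/-- One-to-one matching (as a set of pairs). -/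
def IsMatching (μ : Finset (D × H)) : Prop :=
  (∀ d h h', (d, h) ∈ μ → (d, h') ∈ μ → h = h') ∧
    (∀ d d' h, (d, h) ∈ μ → (d', h) ∈ μ → d = d')

/-- Common preferences: all doctors rank the hospitals identically, all hospitals rank
the doctors identically, everyone is mutually acceptable (and preferences are strict). -/
def CommonPrefs (M : Market D H) : Prop :=
  M.Strict ∧ (∀ d d', M.rankDH d = M.rankDH d') ∧ (∀ h h', M.rankHD h = M.rankHD h') ∧
    ∀ d h, M.accD d h ∧ M.accH h d

/-- Number of hospitals matched under `μ`. -/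
def matchedHospitals (μ : Finset (D × H)) : ℕ :=
  (univ.filter fun h : H => ∃ d, (d, h) ∈ μ).card

/-- Number of blocking pairs of `μ`. -/
def blockingCount (M : Market D H) (μ : Finset (D × H)) : ℕ :=
  (univ.filter fun p : D × H => Blocks M μ p.1 p.2).card

end Model

/-- `(ι,κ)` is globally adequate: adequate at every (strict) preference profile. -/
def GloballyAdequate (D H : Type*) [Fintype D] [Fintype H] [DecidableEq D] [DecidableEq H]
    (ι : H → ℕ) (κ : D → ℕ) : Prop :=
  ∀ M : Market D H, M.Strict → Adequate M ι κ

variable {D H : Type*} [Fintype D] [Fintype H] [DecidableEq D] [DecidableEq H]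

/-! Under common preferences, list doctors and hospitals by their common rank, counting
positions from 0, and cut them into consecutive blocks: `l` doctors and `k` hospitals per block,
so that the block of a doctor is `position / l` and her index within it is `position % l`.
In the hospital-proposing interview step each doctor receives proposals only from hospitals of
her own block or later ones and keeps the `k` best, so a hospital ends up rejected exactly by
the doctors of earlier blocks, and the hospitals of a block interview exactly the doctors of
the same block. In the doctor-proposing matching step the `i`-th doctor of a block is then
matched with the `i`-th hospital of that block. When `l ≠ k`, the doctor and the hospital at
position `min l k` are not matched to each other, while each of them is unmatched or matched
to a partner at a later position, so the pair blocks. -/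

theorem Nat.mod_lt_mod_iff_of_div_eq {a b n : ℕ} (h : a / n = b / n) :
    a % n < b % n ↔ a < b := by
  have ha := Nat.div_add_mod a n
  have hb := Nat.div_add_mod b n
  rw [h] at ha
  omega

theorem Nat.min_lt_of_div_eq_of_mod_eq {l k c : ℕ} (hl : 0 < l) (hk : 0 < k) (hlk : l ≠ k)
    (hdiv : c / k = min l k / l) (hmod : c % k = min l k % l) : min l k < c := by
  have hc := Nat.div_add_mod c k
  rcases Nat.lt_or_gt_of_ne hlk with hlt | hgt
  · rw [min_eq_left hlt.le] at hdiv hmod ⊢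
    rw [Nat.div_self hl] at hdiv
    rw [Nat.mod_self] at hmod
    rw [hdiv, hmod] at hc
    omega
  · rw [min_eq_right hgt.le, Nat.mod_eq_of_lt hgt] at hmod
    exact absurd (Nat.mod_lt c hk) (by omega)

section Position

variable {α : Type*} [Fintype α] {r : α → ℕ}

def position (r : α → ℕ) (x : α) : ℕ := #{y | r y < r x}

theorem position_lt_card (r : α → ℕ) (x : α) : position r x < Fintype.card α :=
  card_lt_univ_of_notMem (x := x) (by simp)

theorem position_lt_position_iff {x y : α} : position r x < position r y ↔ r x < r y := by
  constructor
  · intro h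
    by_contra! hyx
    refine h.not_ge (card_le_card fun z hz => ?_)
    simp only [mem_filter, mem_univ, true_and] at hz ⊢
    omega
  · intro h
    refine card_lt_card ⟨fun z hz => ?_, fun hsub => ?_⟩
    · simp only [mem_filter, mem_univ, true_and] at hz ⊢
      omega
    · simpa using hsub (mem_filter.2 ⟨mem_univ x, h⟩)

theorem position_injective (hr : Function.Injective r) : Function.Injective (position r) := by
  intro x y hxy
  by_contra hne
  rcases lt_or_gt_of_ne (hr.ne hne) with h | h
  · exact (position_lt_position_iff.2 h).ne hxy
  · exact (position_lt_position_iff.2 h).ne' hxy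

theorem exists_position_eq (hr : Function.Injective r) {i : ℕ} (hi : i < Fintype.card α) :
    ∃ x, position r x = i := by
  let f : α → Fin (Fintype.card α) := fun x => ⟨position r x, position_lt_card r x⟩
  have hf : Function.Bijective f := (Fintype.bijective_iff_injective_and_card f).2
    ⟨fun x y h => position_injective hr (congrArg Fin.val h), by simp⟩
  obtain ⟨x, hx⟩ := hf.2 ⟨i, hi⟩
  exact ⟨x, congrArg Fin.val hx⟩

theorem exists_position_div_mod (hr : Function.Injective r) {n b j : ℕ} (hj : j < n)
    (hlt : n * b + j < Fintype.card α) : ∃ x, position r x / n = b ∧ position r x % n = j := by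
  obtain ⟨x, hx⟩ := exists_position_eq hr hlt
  exact ⟨x, (Nat.div_mod_unique (by omega)).2 ⟨by rw [hx]; ring, hj⟩⟩

theorem card_position_Ico (hr : Function.Injective r) {a b : ℕ} (hb : b ≤ Fintype.card α) :
    #{y | a ≤ position r y ∧ position r y < b} = b - a := by
  rw [← Nat.card_Ico a b]
  refine card_nbij (position r) (fun y hy => by simpa using hy)
    (fun x _ y _ h => position_injective hr h) (fun i hi => ?_)
  obtain ⟨x, hx⟩ := exists_position_eq hr ((mem_Ico.1 hi).2.trans_le hb)
  exact ⟨x, by simpa [hx] using mem_Ico.1 hi, hx⟩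

theorem card_preceding_in_block_lt (hr : Function.Injective r) {n : ℕ} (hn : 0 < n) (x : α) :
    #{y | position r x / n * n ≤ position r y ∧ position r y < position r x} < n := by
  rw [card_position_Ico hr (position_lt_card r x).le]
  have := Nat.lt_div_mul_add (a := position r x) hn
  omega

theorem card_position_div_eq (hr : Function.Injective r) {n b : ℕ} (hn : 0 < n)
    (hb : (b + 1) * n ≤ Fintype.card α) : #{y | position r y / n = b} = n := by
  have hblock : ∀ y, position r y / n = b ↔ b * n ≤ position r y ∧ position r y < (b + 1) * n :=
    fun y => by rw [Nat.div_eq_iff hn, add_one_mul]; omega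
  simp_rw [hblock]
  rw [card_position_Ico hr hb, add_one_mul, Nat.add_sub_cancel_left]

end Position

section TopN

variable {α : Type*} [DecidableEq α] {r : α → ℕ} {n : ℕ} {s : Finset α} {x : α}

theorem mem_topN : x ∈ topN r n s ↔ x ∈ s ∧ #{y ∈ s | r y < r x} < n := mem_filter

theorem topN_zero (r : α → ℕ) (s : Finset α) : topN r 0 s = ∅ := by
  ext x
  simp [mem_topN]

theorem mem_topN_one : x ∈ topN r 1 s ↔ x ∈ s ∧ ∀ y ∈ s, r x ≤ r y := by
  simp [mem_topN, filter_eq_empty_iff]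

theorem notMem_topN_of_subset {t : Finset α} (ht : t ⊆ {y ∈ s | r y < r x}) (hn : n ≤ #t) :
    x ∉ topN r n s :=
  fun hx => (hn.trans (card_le_card ht)).not_gt (mem_topN.1 hx).2

end TopN

theorem iterate_card_fixed {α : Type*} [Fintype α] [DecidableEq α] (f : Finset α → Finset α)
    (hf : ∀ s, s ⊆ f s) : f (f^[Fintype.card α] ∅) = f^[Fintype.card α] ∅ := by
  have grow : ∀ i, f (f^[i] ∅) = f^[i] ∅ ∨ i ≤ #(f^[i] ∅) := by
    intro i
    induction i with
    | zero => simp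
    | succ i ih =>
      rw [Function.iterate_succ_apply']
      by_cases hfix : f (f^[i] ∅) = f^[i] ∅
      · left; rw [hfix, hfix]
      · right
        have hi := ih.resolve_left hfix
        have := card_lt_card (ssubset_of_subset_of_ne (hf _) (Ne.symm hfix))
        omega
  rcases grow (Fintype.card α) with h | h
  · exact h
  · have huniv := eq_univ_of_card _ (h.antisymm' (card_le_univ _))
    rw [huniv]
    exact (subset_univ _).antisymm (huniv ▸ hf _)

structure CommonRanks (M : Market D H) (rD : H → ℕ) (rH : D → ℕ) : Prop where
  rankDH_eq : ∀ d, M.rankDH d = rD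
  rankHD_eq : ∀ h, M.rankHD h = rH
  injective_rD : Function.Injective rD
  injective_rH : Function.Injective rH
  accD : ∀ d h, M.accD d h
  accH : ∀ h d, M.accH h d

omit [Fintype D] [Fintype H] [DecidableEq D] [DecidableEq H] in
theorem CommonPrefs.commonRanks {M : Market D H} (hM : CommonPrefs M) (d₀ : D) (h₀ : H) :
    CommonRanks M (M.rankDH d₀) (M.rankHD h₀) where
  rankDH_eq d := hM.2.1 d d₀
  rankHD_eq h := hM.2.2.1 h h₀
  injective_rD := hM.1.1 d₀
  injective_rH := hM.1.2 h₀
  accD d h := (hM.2.2.2 d h).1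
  accH h d := (hM.2.2.2 d h).2

section Interviews

variable {M : Market D H} {ι : H → ℕ} {κ : D → ℕ} {R : Finset (H × D)} {d : D} {h : H}

omit [Fintype H] in
theorem notMem_of_mem_hProps (hd : d ∈ hProps M ι R h) : (h, d) ∉ R := by
  simp only [hProps, mem_topN, mem_filter, mem_univ, true_and] at hd
  exact hd.1.2

theorem iStep_iRej (M : Market D H) (ι : H → ℕ) (κ : D → ℕ) :
    iStep M ι κ (iRej M ι κ) = iRej M ι κ := by
  have := iterate_card_fixed (iStep M ι κ) fun _ => subset_union_left
  rwa [Fintype.card_prod, mul_comm] at this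

theorem mem_dKeeps_iRej (hd : d ∈ hProps M ι (iRej M ι κ) h) :
    h ∈ dKeeps M ι κ (iRej M ι κ) d := by
  by_contra hkeep
  have hrej : (h, d) ∈ iStep M ι κ (iRej M ι κ) :=
    mem_union_right _ (by simp [hd, hkeep])
  rw [iStep_iRej] at hrej
  exact notMem_of_mem_hProps hd hrej

theorem interviews_eq_empty {l k : ℕ} (h0 : l = 0 ∨ k = 0) :
    interviews M (fun _ => l) (fun _ => k) = ∅ := by
  rcases h0 with rfl | rfl <;> simp [interviews, hProps, dKeeps, topN_zero]

variable {rD : H → ℕ} {rH : D → ℕ} {l k : ℕ}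

def interviewRejections (rD : H → ℕ) (rH : D → ℕ) (l k : ℕ) : Finset (H × D) :=
  {p | position rH p.2 / l < position rD p.1 / k}

omit [Fintype H] in
theorem CommonRanks.hProps_eq (hc : CommonRanks M rD rH) (R : Finset (H × D)) (h : H) :
    hProps M (fun _ => l) R h = topN rH l {d | (h, d) ∉ R} := by
  simp [hProps, hc.rankHD_eq, hc.accH]

theorem CommonRanks.dKeeps_eq (hc : CommonRanks M rD rH) (R : Finset (H × D)) (d : D) :
    dKeeps M (fun _ => l) (fun _ => k) R d = topN rD k {h | d ∈ hProps M (fun _ => l) R h} := by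
  simp [dKeeps, hc.rankDH_eq, hc.accD]

theorem block_le_of_mem_hProps (hc : CommonRanks M rD rH) (hl : 0 < l)
    (hR : R ⊆ interviewRejections rD rH l k) (hd : d ∈ hProps M (fun _ => l) R h) :
    position rH d / l ≤ position rD h / k := by
  by_contra! hlt
  have hfull : (position rD h / k + 1) * l ≤ position rH d := (Nat.le_div_iff_mul_le hl).1 hlt
  rw [hc.hProps_eq] at hd
  refine notMem_topN_of_subset (t := {y | position rH y / l = position rD h / k})
    (fun y hy => ?_) ?_ hd
  · simp only [mem_filter, mem_univ, true_and] at hy ⊢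
    refine ⟨fun hyR => ?_, position_lt_position_iff.1 (Nat.lt_of_div_lt_div (hy ▸ hlt))⟩
    simpa [interviewRejections, hy] using hR hyR
  · rw [card_position_div_eq hc.injective_rH hl (hfull.trans (position_lt_card _ _).le)]

theorem mem_dKeeps_of_block_le (hc : CommonRanks M rD rH) (hl : 0 < l) (hk : 0 < k)
    (hR : R ⊆ interviewRejections rD rH l k) (hd : d ∈ hProps M (fun _ => l) R h)
    (hle : position rD h / k ≤ position rH d / l) : h ∈ dKeeps M (fun _ => l) (fun _ => k) R d := by
  rw [hc.dKeeps_eq, mem_topN]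
  refine ⟨by simpa using hd, (card_le_card fun h' hh' => ?_).trans_lt
    (card_preceding_in_block_lt hc.injective_rD hk h)⟩
  simp only [mem_filter, mem_univ, true_and] at hh' ⊢
  exact ⟨(Nat.le_div_iff_mul_le hk).1 (hle.trans (block_le_of_mem_hProps hc hl hR hh'.1)),
    position_lt_position_iff.2 hh'.2⟩

theorem iRej_subset (hc : CommonRanks M rD rH) (hl : 0 < l) (hk : 0 < k) :
    iRej M (fun _ => l) (fun _ => k) ⊆ interviewRejections rD rH l k := by
  refine Set.MapsTo.iterate (f := iStep M (fun _ => l) (fun _ => k))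
    (s := {R | R ⊆ interviewRejections rD rH l k}) (fun R (hR : R ⊆ _) p hp => ?_) _
    (empty_subset _)
  rcases mem_union.1 hp with hp | hp
  · exact hR hp
  simp only [mem_filter, mem_univ, true_and] at hp
  by_contra hnot
  exact hp.2 (mem_dKeeps_of_block_le hc hl hk hR hp.1 (by simpa [interviewRejections] using hnot))

omit [Fintype H] in
theorem mem_hProps_of_forall_block_lt (hc : CommonRanks M rD rH) (hl : 0 < l)
    (hR : ∀ y, position rH y / l < position rH d / l → (h, y) ∈ R) (hd : (h, d) ∉ R) :
    d ∈ hProps M (fun _ => l) R h := by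
  rw [hc.hProps_eq, mem_topN]
  refine ⟨by simpa using hd, (card_le_card fun y hy => ?_).trans_lt
    (card_preceding_in_block_lt hc.injective_rH hl d)⟩
  simp only [mem_filter, mem_univ, true_and] at hy ⊢
  refine ⟨?_, position_lt_position_iff.2 hy.2⟩
  by_contra! hlt
  exact hy.1 (hR y ((Nat.div_lt_iff_lt_mul hl).2 hlt))

theorem interviewRejections_subset_iRej (hc : CommonRanks M rD rH) (hl : 0 < l) (hk : 0 < k) :
    interviewRejections rD rH l k ⊆ iRej M (fun _ => l) (fun _ => k) := by
  suffices ∀ b h d, position rH d / l = b → b < position rD h / k →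
      (h, d) ∈ iRej M (fun _ => l) (fun _ => k) from
    fun p hp => this _ p.1 p.2 rfl (by simpa [interviewRejections] using hp)
  intro b
  induction b using Nat.strong_induction_on with
  | _ b ih =>
  intro h d hdb hbh
  have hprop : ∀ h', b ≤ position rD h' / k → (h', d) ∉ iRej M (fun _ => l) (fun _ => k) →
      d ∈ hProps M (fun _ => l) (iRej M (fun _ => l) (fun _ => k)) h' :=
    fun h' hb' => mem_hProps_of_forall_block_lt hc hl fun y hy =>
      ih _ (hdb ▸ hy) h' y rfl (by omega)
  by_contra hn
  have hkeep := mem_dKeeps_iRej (hprop h hbh.le hn)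
  rw [hc.dKeeps_eq] at hkeep
  -- the `k` hospitals of block `b` all propose to `d` and are preferred to `h`
  refine notMem_topN_of_subset (t := {h' | position rD h' / k = b}) (fun h' hh' => ?_) ?_ hkeep
  · simp only [mem_filter, mem_univ, true_and] at hh' ⊢
    refine ⟨hprop h' hh'.ge fun hr => ?_,
      position_lt_position_iff.1 (Nat.lt_of_div_lt_div (hh' ▸ hbh))⟩
    have := iRej_subset hc hl hk hr
    simp only [interviewRejections, mem_filter, mem_univ, true_and] at this
    omega
  · rw [card_position_div_eq hc.injective_rD hk
      (((Nat.le_div_iff_mul_le hk).1 hbh).trans (position_lt_card _ _).le)]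

theorem iRej_eq (hc : CommonRanks M rD rH) (hl : 0 < l) (hk : 0 < k) :
    iRej M (fun _ => l) (fun _ => k) = interviewRejections rD rH l k :=
  (iRej_subset hc hl hk).antisymm (interviewRejections_subset_iRej hc hl hk)

theorem mem_hProps_iRej_iff (hc : CommonRanks M rD rH) (hl : 0 < l) (hk : 0 < k) :
    d ∈ hProps M (fun _ => l) (iRej M (fun _ => l) (fun _ => k)) h ↔
      position rH d / l = position rD h / k := by
  refine ⟨fun hd => ?_, fun hb => ?_⟩
  · have hle := block_le_of_mem_hProps hc hl (iRej_subset hc hl hk) hd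
    have hnot := notMem_of_mem_hProps hd
    simp only [iRej_eq hc hl hk, interviewRejections, mem_filter, mem_univ, true_and] at hnot
    omega
  · refine mem_hProps_of_forall_block_lt hc hl (fun y hy => ?_) ?_ <;>
      simp only [iRej_eq hc hl hk, interviewRejections, mem_filter, mem_univ, true_and] <;> omega

theorem mem_interviews_iff (hc : CommonRanks M rD rH) (hl : 0 < l) (hk : 0 < k) :
    (h, d) ∈ interviews M (fun _ => l) (fun _ => k) ↔ position rH d / l = position rD h / k := by
  simp only [interviews, mem_filter, mem_univ, true_and]
  refine ⟨fun hp => (mem_hProps_iRej_iff hc hl hk).1 hp.1, fun hb => ?_⟩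
  have hd := (mem_hProps_iRej_iff hc hl hk).2 hb
  exact ⟨hd, mem_dKeeps_iRej hd⟩

end Interviews

section FinalMatch

variable {M : Market D H} {V : Finset (H × D)} {S : Finset (D × H)} {d : D} {h : H}

omit [Fintype D] in
theorem mem_of_mem_dProps (hh : h ∈ dProps M V S d) : (h, d) ∈ V := by
  simp only [dProps, mem_topN, mem_filter, mem_univ, true_and] at hh
  exact hh.1.1

omit [Fintype D] in
theorem notMem_of_mem_dProps (hh : h ∈ dProps M V S d) : (d, h) ∉ S := by
  simp only [dProps, mem_topN, mem_filter, mem_univ, true_and] at hh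
  exact hh.1.2

theorem mStep_mRej (M : Market D H) (V : Finset (H × D)) : mStep M V (mRej M V) = mRej M V := by
  have := iterate_card_fixed (mStep M V) fun _ => subset_union_left
  rwa [Fintype.card_prod] at this

theorem mem_hKeeps_mRej (hh : h ∈ dProps M V (mRej M V) d) : d ∈ hKeeps M V (mRej M V) h := by
  by_contra hkeep
  have hrej : (d, h) ∈ mStep M V (mRej M V) := mem_union_right _ (by simp [hh, hkeep])
  rw [mStep_mRej] at hrej
  exact notMem_of_mem_dProps hh hrej

theorem finalMatch_empty (M : Market D H) : finalMatch M ∅ = ∅ := by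
  ext ⟨d, h⟩
  simp only [finalMatch, mem_filter, mem_univ, true_and, notMem_empty, iff_false, not_and]
  exact fun hh => absurd (mem_of_mem_dProps hh) (notMem_empty _)

variable {rD : H → ℕ} {rH : D → ℕ} {l k : ℕ}

def matchRejections (rD : H → ℕ) (rH : D → ℕ) (l k : ℕ) : Finset (D × H) :=
  {p | position rH p.1 / l = position rD p.2 / k ∧ position rD p.2 % k < position rH p.1 % l}

omit [Fintype D] in
theorem CommonRanks.dProps_eq (hc : CommonRanks M rD rH) (V : Finset (H × D))
    (S : Finset (D × H)) (d : D) :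
    dProps M V S d = topN rD 1 {h | (h, d) ∈ V ∧ (d, h) ∉ S} := by
  rw [dProps, hc.rankDH_eq]

theorem CommonRanks.hKeeps_eq (hc : CommonRanks M rD rH) (V : Finset (H × D))
    (S : Finset (D × H)) (h : H) :
    hKeeps M V S h = topN rH 1 {d | h ∈ dProps M V S d} := by
  rw [hKeeps, hc.rankHD_eq]

theorem index_le_of_mem_dProps (hc : CommonRanks M rD rH) (hk : 0 < k)
    (hV : ∀ h d, (h, d) ∈ V ↔ position rH d / l = position rD h / k)
    (hS : S ⊆ matchRejections rD rH l k) (hh : h ∈ dProps M V S d) :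
    position rD h % k ≤ position rH d % l := by
  by_contra! hlt
  have hb := (hV h d).1 (mem_of_mem_dProps hh)
  have hpos := Nat.div_add_mod (position rD h) k
  obtain ⟨h₀, hb₀, hi₀⟩ := exists_position_div_mod hc.injective_rD (b := position rD h / k) (hlt.trans (Nat.mod_lt _ hk))
    ((show _ < position rD h by omega).trans (position_lt_card _ _))
  rw [hc.dProps_eq, mem_topN_one] at hh
  refine (hh.2 h₀ ?_).not_gt (position_lt_position_iff.1 ?_)
  · simp only [mem_filter, mem_univ, true_and, hV, hb₀, hb]
    intro hS₀
    simpa [matchRejections, hi₀] using hS hS₀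
  · rwa [← Nat.mod_lt_mod_iff_of_div_eq hb₀, hi₀]

theorem mem_hKeeps_of_index_le (hc : CommonRanks M rD rH) (hk : 0 < k)
    (hV : ∀ h d, (h, d) ∈ V ↔ position rH d / l = position rD h / k)
    (hS : S ⊆ matchRejections rD rH l k) (hh : h ∈ dProps M V S d)
    (hle : position rH d % l ≤ position rD h % k) : d ∈ hKeeps M V S h := by
  rw [hc.hKeeps_eq, mem_topN_one]
  refine ⟨by simpa using hh, fun d' hd' => ?_⟩
  simp only [mem_filter, mem_univ, true_and] at hd'
  by_contra! hlt
  have hidx := index_le_of_mem_dProps hc hk hV hS hd'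
  have hblock : position rH d' / l = position rH d / l :=
    ((hV h d').1 (mem_of_mem_dProps hd')).trans ((hV h d).1 (mem_of_mem_dProps hh)).symm
  have := (Nat.mod_lt_mod_iff_of_div_eq hblock).2 (position_lt_position_iff.2 hlt)
  omega

theorem mRej_subset (hc : CommonRanks M rD rH) (hk : 0 < k)
    (hV : ∀ h d, (h, d) ∈ V ↔ position rH d / l = position rD h / k) :
    mRej M V ⊆ matchRejections rD rH l k := by
  refine Set.MapsTo.iterate (f := mStep M V) (s := {S | S ⊆ matchRejections rD rH l k})
    (fun S (hS : S ⊆ _) p hp => ?_) _ (empty_subset _)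
  rcases mem_union.1 hp with hp | hp
  · exact hS hp
  simp only [mem_filter, mem_univ, true_and] at hp
  simp only [matchRejections, mem_filter, mem_univ, true_and]
  refine ⟨(hV _ _).1 (mem_of_mem_dProps hp.1), ?_⟩
  by_contra! hle
  exact hp.2 (mem_hKeeps_of_index_le hc hk hV hS hp.1 hle)

theorem mem_dProps_of_forall_index_lt (hc : CommonRanks M rD rH)
    (hV : ∀ h d, (h, d) ∈ V ↔ position rH d / l = position rD h / k)
    (hS : ∀ h', (h', d) ∈ V → position rD h' % k < position rD h % k → (d, h') ∈ S)
    (hhV : (h, d) ∈ V) (hh : (d, h) ∉ S) : h ∈ dProps M V S d := by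
  rw [hc.dProps_eq, mem_topN_one]
  refine ⟨by simp [hhV, hh], fun h' hh' => ?_⟩
  simp only [mem_filter, mem_univ, true_and] at hh'
  by_contra! hlt
  have hblock : position rD h' / k = position rD h / k :=
    ((hV h' d).1 hh'.1).symm.trans ((hV h d).1 hhV)
  exact hh'.2 (hS h' hh'.1 ((Nat.mod_lt_mod_iff_of_div_eq hblock).2
    (position_lt_position_iff.2 hlt)))

theorem matchRejections_subset_mRej (hc : CommonRanks M rD rH) (hl : 0 < l) (hk : 0 < k)
    (hV : ∀ h d, (h, d) ∈ V ↔ position rH d / l = position rD h / k) :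
    matchRejections rD rH l k ⊆ mRej M V := by
  suffices ∀ j d h, position rH d / l = position rD h / k → position rD h % k = j →
      j < position rH d % l → (d, h) ∈ mRej M V from
    fun p hp => by
      simp only [matchRejections, mem_filter, mem_univ, true_and] at hp
      exact this _ p.1 p.2 hp.1 rfl hp.2
  intro j
  induction j using Nat.strong_induction_on with
  | _ j ih =>
  intro d h hb hj hjd
  have hprop : ∀ d', position rH d' / l = position rD h / k → j ≤ position rH d' % l →
      (d', h) ∉ mRej M V → h ∈ dProps M V (mRej M V) d' :=
    fun d' hb' hj' => mem_dProps_of_forall_index_lt hc hV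
      (fun h' hh' hlt => ih _ (hj ▸ hlt) d' h' ((hV h' d').1 hh') rfl (by omega)) ((hV h d').2 hb')
  by_contra hn
  have hkeep := mem_hKeeps_mRej (hprop d hb hjd.le hn)
  rw [hc.hKeeps_eq, mem_topN_one] at hkeep
  -- the doctor `d₀` of index `j` in the block of `d` also proposes to `h`, and is preferred
  have hpos := Nat.div_add_mod (position rH d) l
  obtain ⟨d₀, hb₀, hj₀⟩ := exists_position_div_mod hc.injective_rH (b := position rH d / l)
    (hjd.trans (Nat.mod_lt _ hl)) ((show _ < position rH d by omega).trans (position_lt_card _ _))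
  have hn₀ : (d₀, h) ∉ mRej M V := fun hr => by
    have := mRej_subset hc hk hV hr
    simp only [matchRejections, mem_filter, mem_univ, true_and] at this
    omega
  refine (hkeep.2 d₀ (by simpa using hprop d₀ (hb₀.trans hb) hj₀.ge hn₀)).not_gt
    (position_lt_position_iff.1 ?_)
  rwa [← Nat.mod_lt_mod_iff_of_div_eq hb₀, hj₀]

theorem mRej_eq (hc : CommonRanks M rD rH) (hl : 0 < l) (hk : 0 < k)
    (hV : ∀ h d, (h, d) ∈ V ↔ position rH d / l = position rD h / k) :
    mRej M V = matchRejections rD rH l k :=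
  (mRej_subset hc hk hV).antisymm (matchRejections_subset_mRej hc hl hk hV)

theorem mem_dProps_mRej_iff (hc : CommonRanks M rD rH) (hl : 0 < l) (hk : 0 < k)
    (hV : ∀ h d, (h, d) ∈ V ↔ position rH d / l = position rD h / k) :
    h ∈ dProps M V (mRej M V) d ↔
      position rH d / l = position rD h / k ∧ position rH d % l = position rD h % k := by
  refine ⟨fun hh => ?_, fun ⟨hb, hi⟩ => ?_⟩
  · have hle := index_le_of_mem_dProps hc hk hV (mRej_subset hc hk hV) hh
    have hnot := notMem_of_mem_dProps hh
    have hb := (hV h d).1 (mem_of_mem_dProps hh)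
    simp only [mRej_eq hc hl hk hV, matchRejections, mem_filter, mem_univ, true_and] at hnot
    exact ⟨hb, by omega⟩
  · refine mem_dProps_of_forall_index_lt hc hV (fun h' hh' hlt => ?_) ((hV h d).2 hb) ?_ <;>
      simp only [mRej_eq hc hl hk hV, matchRejections, mem_filter, mem_univ, true_and]
    · exact ⟨(hV h' d).1 hh', by omega⟩
    · omega

theorem mem_ikMatching_iff (hc : CommonRanks M rD rH) (hl : 0 < l) (hk : 0 < k) :
    (d, h) ∈ ikMatching M (fun _ => l) (fun _ => k) ↔
      position rH d / l = position rD h / k ∧ position rH d % l = position rD h % k := by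
  have hV : ∀ h d, (h, d) ∈ interviews M (fun _ => l) (fun _ => k) ↔
      position rH d / l = position rD h / k := fun _ _ => mem_interviews_iff hc hl hk
  simp only [ikMatching, finalMatch, mem_filter, mem_univ, true_and]
  exact ⟨fun hp => (mem_dProps_mRej_iff hc hl hk hV).1 hp.1,
    fun hp => have hh := (mem_dProps_mRej_iff hc hl hk hV).2 hp; ⟨hh, mem_hKeeps_mRej hh⟩⟩

end FinalMatch

omit [Fintype D] [Fintype H] [DecidableEq D] [DecidableEq H] in
theorem blocks_empty {M : Market D H} {d : D} {h : H} (hd : M.accD d h) (hh : M.accH h d) :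
    Blocks M ∅ d h :=
  ⟨hd, hh, notMem_empty _, by simp, by simp⟩

theorem blocks_ikMatching {M : Market D H} {rD : H → ℕ} {rH : D → ℕ} {l k : ℕ} {d : D} {h : H}
    (hc : CommonRanks M rD rH) (hl : 0 < l) (hk : 0 < k) (hlk : l ≠ k)
    (hd : position rH d = min l k) (hh : position rD h = min l k) :
    Blocks M (ikMatching M (fun _ => l) (fun _ => k)) d h := by
  refine ⟨hc.accD d h, hc.accH h d, fun hdh => ?_, fun h' hh' => ?_, fun d' hd' => ?_⟩
  · obtain ⟨hb, hi⟩ := (mem_ikMatching_iff hc hl hk).1 hdh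
    rw [hd, hh] at hb hi
    exact lt_irrefl _ (Nat.min_lt_of_div_eq_of_mod_eq hl hk hlk hb.symm hi.symm)
  · obtain ⟨hb, hi⟩ := (mem_ikMatching_iff hc hl hk).1 hh'
    rw [hd] at hb hi
    rw [hc.rankDH_eq, ← position_lt_position_iff, hh]
    exact Nat.min_lt_of_div_eq_of_mod_eq hl hk hlk hb.symm hi.symm
  · obtain ⟨hb, hi⟩ := (mem_ikMatching_iff hc hl hk).1 hd'
    rw [hh, min_comm] at hb hi
    rw [hc.rankHD_eq, ← position_lt_position_iff, hd, min_comm]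
    exact Nat.min_lt_of_div_eq_of_mod_eq hk hl hlk.symm hb hi

/-- Under common preferences, a homogeneous arrangement `(l,k)` with
`l ≠ k` and `min {l,k} < min {|D|, |H|}` is not adequate: the `(l,k)`-matching is
not stable. -/
theorem unequal_homogeneous_not_adequate
    (M : Market D H) (hM : CommonPrefs M) (l k : ℕ) (hlk : l ≠ k)
    (hmin : min l k < min (Fintype.card D) (Fintype.card H)) :
    ¬ Adequate M (fun _ => l) (fun _ => k) := by
  have hD : min l k < Fintype.card D := hmin.trans_le (min_le_left _ _)
  have hH : min l k < Fintype.card H := hmin.trans_le (min_le_right _ _)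
  obtain ⟨d₀⟩ : Nonempty D := Fintype.card_pos_iff.1 (by omega)
  obtain ⟨h₀⟩ : Nonempty H := Fintype.card_pos_iff.1 (by omega)
  have hc := hM.commonRanks d₀ h₀
  intro hA
  by_cases h0 : l = 0 ∨ k = 0
  · rw [Adequate, ikMatching, interviews_eq_empty h0, finalMatch_empty] at hA
    exact hA d₀ h₀ (blocks_empty (hc.accD d₀ h₀) (hc.accH h₀ d₀))
  obtain ⟨hl, hk⟩ := not_or.1 h0
  obtain ⟨d, hd⟩ := exists_position_eq hc.injective_rH hD
  obtain ⟨h, hh⟩ := exists_position_eq hc.injective_rD hH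
  exact hA d h (blocks_ikMatching hc (Nat.pos_of_ne_zero hl) (Nat.pos_of_ne_zero hk) hlk hd hh)
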